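/- arXiv:1207.0624 — 2 statements merged into one kernel-verified Lean document; each statement's English description precedes it below -/
import Mathlib

section
/- Let Γ be a group with a conjugation-invariant symmetric generating set S, and suppose f₁,…,f_k ∈ Γ pairwise commute and there exist homogeneous quasi-morphisms ψ₁,…,ψ_k on Γ, each vanishing on S, with ψ_i(f_j) = δ_{ij}. Then the homomorphism Ψ : ℤ^k → Γ, Ψ(d₁,…,d_k) = f₁^{d₁}⋯f_k^{d_k}, is injective and bi-Lipschitz with respect to the ℓ¹ word metric on ℤ^k and the word metric on Γ associated to S; explicitly, letting 𝔇 = max_i D_{ψ_i} > 0 and 𝔐 = max_i ‖f_i‖_S, one has (k𝔇)⁻¹ Σ|d_i| ≤ ‖f₁^{d₁}⋯f_k^{d_k}‖_S ≤ 𝔐 Σ|d_i|. -/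
def IsHomogeneousQM {Γ : Type*} [Group Γ] (ψ : Γ → ℝ) : Prop :=
  ∀ (g : Γ) (n : ℤ), ψ (g ^ n) = n * ψ g

noncomputable def wordNorm {Γ : Type*} [Group Γ] (S : Set Γ) (f : Γ) : ℕ :=
  sInf {m | ∃ l : List Γ, l.length = m ∧ (∀ x ∈ l, x ∈ S) ∧ l.prod = f}

/-!
Since each `ψ i` vanishes on `S` and changes by at most `D i` per letter, `|ψ i g| ≤ D i ‖g‖_S`.
A homogeneous quasi-morphism is additive on commuting pairs (the defect of `(g ^ n, h ^ n)` is
`n` times that of `(g, h)`), so `ψ i (f₁ ^ d₁ ⋯ f_k ^ d_k) = d i`; this gives injectivity and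
`|d i| ≤ 𝔇 ‖f₁ ^ d₁ ⋯ f_k ^ d_k‖_S`, and summing over `i` the lower bound. The upper bound is the
triangle inequality for the word norm.
-/

section WordNorm

variable {Γ : Type*} [Group Γ] {S : Set Γ}

lemma wordNorm_le_length {g : Γ} {l : List Γ} (hl : ∀ x ∈ l, x ∈ S) (hprod : l.prod = g) :
    wordNorm S g ≤ l.length :=
  Nat.sInf_le ⟨l, rfl, hl, hprod⟩

lemma exists_list_length_eq_wordNorm
    (hgen : ∀ f : Γ, ∃ l : List Γ, (∀ x ∈ l, x ∈ S) ∧ l.prod = f) (g : Γ) :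
    ∃ l : List Γ, l.length = wordNorm S g ∧ (∀ x ∈ l, x ∈ S) ∧ l.prod = g := by
  obtain ⟨l, hl, hprod⟩ := hgen g
  exact Nat.sInf_mem (s := {m | ∃ l : List Γ, l.length = m ∧ (∀ x ∈ l, x ∈ S) ∧ l.prod = g})
    ⟨l.length, l, rfl, hl, hprod⟩

@[simp]
lemma wordNorm_one : wordNorm S (1 : Γ) = 0 :=
  Nat.le_zero.mp (wordNorm_le_length (l := []) (by simp) rfl)

lemma wordNorm_mul_le (hgen : ∀ f : Γ, ∃ l : List Γ, (∀ x ∈ l, x ∈ S) ∧ l.prod = f)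
    (g h : Γ) : wordNorm S (g * h) ≤ wordNorm S g + wordNorm S h := by
  obtain ⟨l₁, hlen₁, hl₁, rfl⟩ := exists_list_length_eq_wordNorm hgen g
  obtain ⟨l₂, hlen₂, hl₂, rfl⟩ := exists_list_length_eq_wordNorm hgen h
  rw [← hlen₁, ← hlen₂, ← List.length_append, ← List.prod_append]
  exact wordNorm_le_length (fun x hx => (List.mem_append.mp hx).elim (hl₁ x) (hl₂ x)) rfl

lemma wordNorm_inv_le (hsymm : ∀ s ∈ S, s⁻¹ ∈ S)
    (hgen : ∀ f : Γ, ∃ l : List Γ, (∀ x ∈ l, x ∈ S) ∧ l.prod = f) (g : Γ) :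
    wordNorm S g⁻¹ ≤ wordNorm S g := by
  obtain ⟨l, hlen, hl, rfl⟩ := exists_list_length_eq_wordNorm hgen g
  rw [← hlen, List.prod_inv_reverse, ← List.length_map (f := fun x : Γ => x⁻¹),
    ← List.length_reverse]
  refine wordNorm_le_length (fun x hx => ?_) rfl
  obtain ⟨y, hy, rfl⟩ := List.mem_map.mp (List.mem_reverse.mp hx)
  exact hsymm y (hl y hy)

lemma wordNorm_pow_le (hgen : ∀ f : Γ, ∃ l : List Γ, (∀ x ∈ l, x ∈ S) ∧ l.prod = f)
    (g : Γ) (n : ℕ) : wordNorm S (g ^ n) ≤ n * wordNorm S g := by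
  induction n with
  | zero => simp
  | succ n ih =>
    calc wordNorm S (g ^ (n + 1)) ≤ wordNorm S (g ^ n) + wordNorm S g := by
          rw [pow_succ]; exact wordNorm_mul_le hgen _ _
      _ ≤ (n + 1) * wordNorm S g := by rw [add_one_mul]; omega

lemma wordNorm_zpow_le (hsymm : ∀ s ∈ S, s⁻¹ ∈ S)
    (hgen : ∀ f : Γ, ∃ l : List Γ, (∀ x ∈ l, x ∈ S) ∧ l.prod = f) (g : Γ) (n : ℤ) :
    wordNorm S (g ^ n) ≤ n.natAbs * wordNorm S g := by
  rcases Int.natAbs_eq n with hn | hn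
  · rw [hn, zpow_natCast]
    exact wordNorm_pow_le hgen g _
  · rw [hn, zpow_neg, zpow_natCast, Int.natAbs_neg, Int.natAbs_natCast]
    exact (wordNorm_inv_le hsymm hgen _).trans (wordNorm_pow_le hgen g _)

lemma wordNorm_list_prod_le (hgen : ∀ f : Γ, ∃ l : List Γ, (∀ x ∈ l, x ∈ S) ∧ l.prod = f)
    (l : List Γ) : wordNorm S l.prod ≤ (l.map (wordNorm S)).sum := by
  induction l with
  | nil => simp
  | cons a t ih =>
    rw [List.prod_cons, List.map_cons, List.sum_cons]
    exact (wordNorm_mul_le hgen a t.prod).trans (Nat.add_le_add_left ih _)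

lemma wordNorm_prod_ofFn_zpow_le {k : ℕ} (hsymm : ∀ s ∈ S, s⁻¹ ∈ S)
    (hgen : ∀ f : Γ, ∃ l : List Γ, (∀ x ∈ l, x ∈ S) ∧ l.prod = f)
    (f : Fin k → Γ) {M : ℕ} (hM : ∀ i, wordNorm S (f i) ≤ M) (d : Fin k → ℤ) :
    (wordNorm S (List.ofFn fun i => f i ^ d i).prod : ℝ) ≤ M * ∑ i, |(d i : ℝ)| := by
  have hprod := wordNorm_list_prod_le hgen (List.ofFn fun i => f i ^ d i)
  rw [List.map_ofFn, List.sum_ofFn] at hprod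
  calc (wordNorm S (List.ofFn fun i => f i ^ d i).prod : ℝ)
      ≤ ∑ i, ((d i).natAbs * M : ℕ) := by
        exact_mod_cast hprod.trans <| Finset.sum_le_sum fun i _ =>
          (wordNorm_zpow_le hsymm hgen (f i) (d i)).trans (Nat.mul_le_mul_left _ (hM i))
    _ = M * ∑ i, |(d i : ℝ)| := by
        rw [Finset.mul_sum]
        push_cast
        simp only [Nat.cast_natAbs, Int.cast_abs, mul_comm]

end WordNorm

namespace IsHomogeneousQM

variable {Γ : Type*} [Group Γ] {ψ : Γ → ℝ} {D : ℝ}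

lemma map_one (hψ : IsHomogeneousQM ψ) : ψ 1 = 0 := by
  simpa using hψ 1 0

lemma map_mul_of_commute (hψ : IsHomogeneousQM ψ)
    (hdef : ∀ g h : Γ, |ψ (g * h) - ψ g - ψ h| ≤ D) {g h : Γ} (hc : Commute g h) :
    ψ (g * h) = ψ g + ψ h := by
  set x := ψ (g * h) - ψ g - ψ h
  have hbound : ∀ n : ℕ, n * |x| ≤ D := fun n => by
    have hdef_n := hdef (g ^ (n : ℤ)) (h ^ (n : ℤ))
    rwa [← hc.mul_zpow, hψ, hψ, hψ, ← mul_sub, ← mul_sub, abs_mul, Int.cast_natCast,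
      Nat.abs_cast] at hdef_n
  suffices |x| = 0 by linarith [abs_eq_zero.mp this]
  by_contra hx
  have hx_pos : 0 < |x| := lt_of_le_of_ne (abs_nonneg x) (Ne.symm hx)
  obtain ⟨n, hn⟩ := exists_nat_gt (D / |x|)
  linarith [hbound n, (div_lt_iff₀ hx_pos).mp hn]

lemma map_list_prod_of_commute (hψ : IsHomogeneousQM ψ)
    (hdef : ∀ g h : Γ, |ψ (g * h) - ψ g - ψ h| ≤ D) (l : List Γ)
    (hl : ∀ a ∈ l, ∀ b ∈ l, Commute a b) : ψ l.prod = (l.map ψ).sum := by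
  induction l with
  | nil => simp [hψ.map_one]
  | cons a t ih =>
    have hc : Commute a t.prod :=
      Commute.list_prod_right _ _ fun b hb => hl a List.mem_cons_self b (List.mem_cons_of_mem a hb)
    rw [List.prod_cons, hψ.map_mul_of_commute hdef hc,
      ih fun x hx y hy => hl x (List.mem_cons_of_mem a hx) y (List.mem_cons_of_mem a hy)]
    simp

lemma map_prod_ofFn_zpow {k : ℕ} (hψ : IsHomogeneousQM ψ)
    (hdef : ∀ g h : Γ, |ψ (g * h) - ψ g - ψ h| ≤ D) (f : Fin k → Γ)
    (hcomm : ∀ i j, Commute (f i) (f j)) (d : Fin k → ℤ) :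
    ψ (List.ofFn fun i => f i ^ d i).prod = ∑ i, d i * ψ (f i) := by
  rw [hψ.map_list_prod_of_commute hdef, List.map_ofFn, List.sum_ofFn]
  · exact Finset.sum_congr rfl fun i _ => hψ (f i) (d i)
  · simp only [List.mem_ofFn]
    rintro _ ⟨i, rfl⟩ _ ⟨j, rfl⟩
    exact (hcomm i j).zpow_zpow _ _

lemma abs_le_mul_wordNorm {S : Set Γ} (hψ : IsHomogeneousQM ψ)
    (hdef : ∀ g h : Γ, |ψ (g * h) - ψ g - ψ h| ≤ D) (hvan : ∀ s ∈ S, ψ s = 0)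
    (hgen : ∀ f : Γ, ∃ l : List Γ, (∀ x ∈ l, x ∈ S) ∧ l.prod = f) (g : Γ) :
    |ψ g| ≤ D * wordNorm S g := by
  obtain ⟨l, hlen, hl, rfl⟩ := exists_list_length_eq_wordNorm hgen g
  rw [← hlen]
  clear hlen
  induction l with
  | nil => simp [hψ.map_one]
  | cons a t ih =>
    have hdef_a := hdef a t.prod
    rw [hvan a (hl a List.mem_cons_self), sub_zero] at hdef_a
    have ht := ih fun x hx => hl x (List.mem_cons_of_mem a hx)
    rw [List.prod_cons, List.length_cons, Nat.cast_succ, mul_add_one]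
    linarith [abs_sub_abs_le_abs_sub (ψ (a * t.prod)) (ψ t.prod)]

end IsHomogeneousQM

lemma sum_abs_le_mul_wordNorm {Γ : Type*} [Group Γ] {k : ℕ} {S : Set Γ}
    (hgen : ∀ f : Γ, ∃ l : List Γ, (∀ x ∈ l, x ∈ S) ∧ l.prod = f) (ψ : Fin k → Γ → ℝ)
    {D : Fin k → ℝ} (hdef : ∀ i, ∀ g h : Γ, |ψ i (g * h) - ψ i g - ψ i h| ≤ D i)
    (hhom : ∀ i, IsHomogeneousQM (ψ i)) (hvan : ∀ i, ∀ s ∈ S, ψ i s = 0)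
    {𝔇 : ℝ} (h𝔇 : ∀ i, D i ≤ 𝔇) (d : Fin k → ℤ) {g : Γ} (hg : ∀ i, ψ i g = d i) :
    ∑ i, |(d i : ℝ)| ≤ k * 𝔇 * wordNorm S g := by
  calc ∑ i, |(d i : ℝ)| ≤ ∑ _i : Fin k, 𝔇 * wordNorm S g :=
        Finset.sum_le_sum fun i _ => by
          rw [← hg i]
          exact ((hhom i).abs_le_mul_wordNorm (hdef i) (hvan i) hgen g).trans
            (mul_le_mul_of_nonneg_right (h𝔇 i) (Nat.cast_nonneg _))
    _ = k * 𝔇 * wordNorm S g := by simp [mul_assoc]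

theorem biLipschitz_Zk_embedding_general {Γ : Type*} [Group Γ] (k : ℕ)
    (S : Set Γ)
    (hsymm : ∀ s ∈ S, s⁻¹ ∈ S)
    (hgen : ∀ f : Γ, ∃ l : List Γ, (∀ x ∈ l, x ∈ S) ∧ l.prod = f)
    (f : Fin k → Γ) (hcomm : ∀ i j, Commute (f i) (f j))
    (ψ : Fin k → Γ → ℝ) (D : Fin k → ℝ)
    (hdef : ∀ i, ∀ g h : Γ, |ψ i (g * h) - ψ i g - ψ i h| ≤ D i)
    (hhom : ∀ i, IsHomogeneousQM (ψ i))
    (hvan : ∀ i, ∀ s ∈ S, ψ i s = 0)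
    (hdelta : ∀ i j, ψ i (f j) = if i = j then 1 else 0)
    (𝔇 : ℝ) (h𝔇 : IsGreatest (Set.range D) 𝔇)
    (𝔐 : ℕ) (h𝔐 : IsGreatest (Set.range fun i => wordNorm S (f i)) 𝔐) :
    Function.Injective (fun d : Fin k → ℤ => (List.ofFn fun i => f i ^ d i).prod) ∧
      ∀ d : Fin k → ℤ,
        ((k : ℝ) * 𝔇)⁻¹ * ∑ i, |(d i : ℝ)| ≤ wordNorm S ((List.ofFn fun i => f i ^ d i).prod) ∧
          (wordNorm S ((List.ofFn fun i => f i ^ d i).prod) : ℝ) ≤ (𝔐 : ℝ) * ∑ i, |(d i : ℝ)| := by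
  have hψ_prod (d : Fin k → ℤ) (i : Fin k) : ψ i (List.ofFn fun j => f j ^ d j).prod = d i := by
    simp [(hhom i).map_prod_ofFn_zpow (hdef i) f hcomm, hdelta]
  have h𝔇_nonneg : 0 ≤ 𝔇 := by
    obtain ⟨i, hi⟩ := h𝔇.1
    exact hi ▸ (abs_nonneg _).trans (hdef i 1 1)
  refine ⟨fun d d' hdd => funext fun i => ?_, fun d => ⟨?_, ?_⟩⟩
  · exact_mod_cast (hψ_prod d i).symm.trans ((congrArg (ψ i) hdd).trans (hψ_prod d' i))
  · refine inv_mul_le_of_le_mul₀ (by positivity) (Nat.cast_nonneg _) ?_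
    exact sum_abs_le_mul_wordNorm hgen ψ hdef hhom hvan (fun i => h𝔇.2 ⟨i, rfl⟩) d (hψ_prod d)
  · exact wordNorm_prod_ofFn_zpow_le hsymm hgen f (fun i => h𝔐.2 ⟨i, rfl⟩) d

/-- Bi-Lipschitz embedding of `ℤ^k`: pairwise commuting elements detected by
homogeneous quasi-morphisms vanishing on the generating set give a bi-Lipschitz
injective homomorphism of `ℤ^k`. -/
theorem biLipschitz_Zk_embedding {Γ : Type*} [Group Γ] (k : ℕ) (hk : 0 < k)
    (S : Set Γ)
    (hsymm : ∀ s ∈ S, s⁻¹ ∈ S)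
    (hconj : ∀ s ∈ S, ∀ g : Γ, g * s * g⁻¹ ∈ S)
    (hgen : ∀ f : Γ, ∃ l : List Γ, (∀ x ∈ l, x ∈ S) ∧ l.prod = f)
    (f : Fin k → Γ) (hcomm : ∀ i j, Commute (f i) (f j))
    (ψ : Fin k → Γ → ℝ) (D : Fin k → ℝ) (hD : ∀ i, 0 < D i)
    (hdef : ∀ i, ∀ g h : Γ, |ψ i (g * h) - ψ i g - ψ i h| ≤ D i)
    (hhom : ∀ i, IsHomogeneousQM (ψ i))
    (hvan : ∀ i, ∀ s ∈ S, ψ i s = 0)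
    (hdelta : ∀ i j, ψ i (f j) = if i = j then 1 else 0)
    (𝔇 : ℝ) (h𝔇 : IsGreatest (Set.range D) 𝔇)
    (𝔐 : ℕ) (h𝔐 : IsGreatest (Set.range fun i => wordNorm S (f i)) 𝔐) :
    Function.Injective (fun d : Fin k → ℤ => (List.ofFn fun i => f i ^ d i).prod) ∧
      ∀ d : Fin k → ℤ,
        ((k : ℝ) * 𝔇)⁻¹ * ∑ i, |(d i : ℝ)| ≤ wordNorm S ((List.ofFn fun i => f i ^ d i).prod) ∧
          (wordNorm S ((List.ofFn fun i => f i ^ d i).prod) : ℝ) ≤ (𝔐 : ℝ) * ∑ i, |(d i : ℝ)| :=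
  biLipschitz_Zk_embedding_general k S hsymm hgen f hcomm ψ D hdef hhom hvan hdelta 𝔇 h𝔇 𝔐 h𝔐
end

section
/- Continuity of Lipschitz-dominated homogeneous quasi-morphisms: let Γ be a topological group with a right-invariant metric d, and ψ : Γ → ℝ a homogeneous quasi-morphism with |ψ(g)| ≤ C·d(1,g) for all g. Suppose f ∈ Γ and (h_k) is a sequence in Γ such that for every p ∈ ℕ, d(f^p, h_k^p) → 0 as k → ∞. Then ψ(h_k) → ψ(f). -/
open Filter Topology

/-!
Comparing `ψ (h ^ p)` with `ψ (f ^ p)` through the quasi-morphism inequality applied to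
`h ^ p = (h ^ p * (f ^ p)⁻¹) * f ^ p`, and then using homogeneity and domination, gives
`p * |ψ h - ψ f| ≤ C * d(f ^ p, h ^ p) + D`. For a fixed `p` the right-hand side tends to `D`
along the sequence, so `|ψ h_k - ψ f|` is eventually at most about `D / p`; letting `p` grow
yields convergence.
-/

theorem tendsto_of_nat_mul_abs_sub_le {α : Type*} {l : Filter α} {u : α → ℝ} {a D : ℝ}
    (e : ℕ → α → ℝ) (he : ∀ p, Tendsto (e p) l (𝓝 0))
    (hbound : ∀ (p : ℕ) k, p * |u k - a| ≤ e p k + D) :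
    Tendsto u l (𝓝 a) := by
  rw [Metric.tendsto_nhds]
  intro ε hε
  obtain ⟨p, hp⟩ := exists_nat_gt (max (2 * D / ε) 0)
  obtain ⟨hpD, hp0⟩ := max_lt_iff.mp hp
  rw [div_lt_iff₀ hε] at hpD
  have hpε : 0 < p * ε / 2 := by positivity
  filter_upwards [(he p).eventually (gt_mem_nhds hpε)] with k hk
  have : (p : ℝ) * |u k - a| < p * ε := by linarith [hbound p k]
  rw [Real.dist_eq]
  exact lt_of_mul_lt_mul_left this (Nat.cast_nonneg p)

theorem dist_one_mul_inv_of_right_invariant {Γ : Type*} [Group Γ] [PseudoMetricSpace Γ]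
    (hinv : ∀ g h k : Γ, dist (g * k) (h * k) = dist g h) (a b : Γ) :
    dist 1 (a * b⁻¹) = dist b a := by
  simpa using (hinv 1 (a * b⁻¹) b).symm

theorem abs_sub_le_abs_mul_inv_add_of_defect {Γ : Type*} [Group Γ] {ψ : Γ → ℝ} {D : ℝ}
    (hdef : ∀ g h : Γ, |ψ (g * h) - ψ g - ψ h| ≤ D) (a b : Γ) :
    |ψ a - ψ b| ≤ |ψ (a * b⁻¹)| + D := by
  have hab := hdef (a * b⁻¹) b
  rw [inv_mul_cancel_right] at hab
  calc |ψ a - ψ b| = |ψ (a * b⁻¹) + (ψ a - ψ (a * b⁻¹) - ψ b)| := by ring_nf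
    _ ≤ |ψ (a * b⁻¹)| + D := (abs_add_le _ _).trans (by gcongr)

theorem IsHomogeneousQM.map_pow {Γ : Type*} [Group Γ] {ψ : Γ → ℝ} (hhom : IsHomogeneousQM ψ)
    (g : Γ) (p : ℕ) : ψ (g ^ p) = p * ψ g := by
  simpa using hhom g p

theorem nat_mul_abs_sub_le_dist_pow {Γ : Type*} [Group Γ] [PseudoMetricSpace Γ]
    (hinv : ∀ g h k : Γ, dist (g * k) (h * k) = dist g h) {ψ : Γ → ℝ} {D C : ℝ}
    (hdef : ∀ g h : Γ, |ψ (g * h) - ψ g - ψ h| ≤ D) (hhom : IsHomogeneousQM ψ)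
    (hdom : ∀ g : Γ, |ψ g| ≤ C * dist 1 g) (f h : Γ) (p : ℕ) :
    p * |ψ h - ψ f| ≤ C * dist (f ^ p) (h ^ p) + D := by
  calc (p : ℝ) * |ψ h - ψ f| = |ψ (h ^ p) - ψ (f ^ p)| := by
        rw [hhom.map_pow, hhom.map_pow, ← mul_sub, abs_mul, Nat.abs_cast]
    _ ≤ |ψ (h ^ p * (f ^ p)⁻¹)| + D := abs_sub_le_abs_mul_inv_add_of_defect hdef _ _
    _ ≤ C * dist (f ^ p) (h ^ p) + D := by
        rw [← dist_one_mul_inv_of_right_invariant hinv]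
        gcongr
        exact hdom _

theorem qm_continuity_general {Γ : Type*} [Group Γ] [PseudoMetricSpace Γ]
    (hinv : ∀ g h k : Γ, dist (g * k) (h * k) = dist g h)
    (ψ : Γ → ℝ) (D : ℝ)
    (hdef : ∀ g h : Γ, |ψ (g * h) - ψ g - ψ h| ≤ D)
    (hhom : IsHomogeneousQM ψ)
    (C : ℝ) (hdom : ∀ g : Γ, |ψ g| ≤ C * dist 1 g)
    (f : Γ) (h : ℕ → Γ)
    (hclose : ∀ p : ℕ, Filter.Tendsto (fun k => dist (f ^ p) (h k ^ p))
      Filter.atTop (nhds 0)) :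
    Filter.Tendsto (fun k => ψ (h k)) Filter.atTop (nhds (ψ f)) :=
  tendsto_of_nat_mul_abs_sub_le (fun p k => C * dist (f ^ p) (h k ^ p))
    (fun p => by simpa using (hclose p).const_mul C)
    (fun p k => nat_mul_abs_sub_le_dist_pow hinv hdef hhom hdom f (h k) p)

/-- Continuity of Lipschitz-dominated homogeneous quasi-morphisms: if all powers of
`h_k` converge to the corresponding powers of `f` in a right-invariant metric, then
`ψ (h_k) → ψ f`. -/
theorem qm_continuity {Γ : Type*} [Group Γ] [PseudoMetricSpace Γ]
    (hinv : ∀ g h k : Γ, dist (g * k) (h * k) = dist g h)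
    (ψ : Γ → ℝ) (D : ℝ) (hD : 0 ≤ D)
    (hdef : ∀ g h : Γ, |ψ (g * h) - ψ g - ψ h| ≤ D)
    (hhom : IsHomogeneousQM ψ)
    (C : ℝ) (hC : 0 < C) (hdom : ∀ g : Γ, |ψ g| ≤ C * dist 1 g)
    (f : Γ) (h : ℕ → Γ)
    (hclose : ∀ p : ℕ, Filter.Tendsto (fun k => dist (f ^ p) (h k ^ p))
      Filter.atTop (nhds 0)) :
    Filter.Tendsto (fun k => ψ (h k)) Filter.atTop (nhds (ψ f)) :=
  qm_continuity_general hinv ψ D hdef hhom C hdom f h hclose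
end
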